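/- arXiv:math/0611883 — 7 statements merged into one kernel-verified Lean document; each statement's English description precedes it below -/
import Mathlib

section
/- Let μ: [0,∞) → [0,∞) be C¹ and positive definite, set B = sup{μ'(s) : 0 ≤ s ≤ 1} (assumed positive and finite), and ξ = 2B. Then the function k defined by k(r) = exp(ξ ∫_1^r (1/μ(l)) dl) for r > 0 and k(0) = 0 is continuously differentiable on [0,∞), with k'(0) = 0. -/
open Set Filter intervalIntegral
open scoped Topology

theorem k_is_C1
    (μ : ℝ → ℝ) (hμC1 : ContDiffOn ℝ 1 μ (Ici 0))
    (hμ0 : μ 0 = 0) (hμpos : ∀ r : ℝ, 0 < r → 0 < μ r)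
    (B : ℝ) (hB : B = sSup ((fun s => derivWithin μ (Ici 0) s) '' Icc 0 1))
    (hBpos : 0 < B)
    (k : ℝ → ℝ) (hk0 : k 0 = 0)
    (hk : ∀ r : ℝ, 0 < r → k r = Real.exp ((2 * B) * ∫ l in (1:ℝ)..r, 1 / μ l)) :
    ∃ k' : ℝ → ℝ, ContinuousOn k' (Ici 0)
      ∧ (∀ r ∈ Ici (0:ℝ), HasDerivWithinAt k (k' r) (Ici 0) r)
      ∧ k' 0 = 0 := by
  have uD : UniqueDiffOn ℝ (Ici (0:ℝ)) := uniqueDiffOn_Ici 0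
  have hμcont : ContinuousOn μ (Ici 0) := hμC1.continuousOn
  have hμ'cont : ContinuousOn (derivWithin μ (Ici 0)) (Ici 0) :=
    hμC1.continuousOn_derivWithin uD le_rfl
  have hμdiff : DifferentiableOn ℝ μ (Ici 0) := hμC1.differentiableOn one_ne_zero
  have hmem : ∀ x : ℝ, 0 < x → Ici (0:ℝ) ∈ 𝓝 x := fun x hx =>
    mem_of_superset (isOpen_Ioi.mem_nhds hx) (Ioi_subset_Ici le_rfl)
  have hdiffAt : ∀ x : ℝ, 0 < x → DifferentiableAt ℝ μ x := fun x hx =>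
    (hμdiff x (le_of_lt hx)).differentiableAt (hmem x hx)
  have hμcontAt : ∀ x : ℝ, 0 < x → ContinuousAt μ x := fun x hx => (hdiffAt x hx).continuousAt
  have hderiv_eq : ∀ x : ℝ, 0 < x → deriv μ x = derivWithin μ (Ici 0) x := fun x hx =>
    (derivWithin_of_mem_nhds (hmem x hx)).symm
  -- the derivative of μ is bounded by B on [0,1]
  have hBdd : ∀ s ∈ Icc (0:ℝ) 1, derivWithin μ (Ici 0) s ≤ B := by
    intro s hs
    rw [hB]
    apply le_csSup
    · exact (isCompact_Icc.image_of_continuousOn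
        (hμ'cont.mono (fun x hx => hx.1))).bddAbove
    · exact ⟨s, hs, rfl⟩
  -- μ l ≤ B * l on [0,1]
  have hμleB : ∀ l ∈ Icc (0:ℝ) 1, μ l ≤ B * l := by
    intro l hl
    have hg : MonotoneOn (fun x => B * x - μ x) (Icc 0 1) := by
      apply monotoneOn_of_deriv_nonneg (convex_Icc 0 1)
      · exact (continuous_const.mul continuous_id).continuousOn.sub
          (hμcont.mono (fun x hx => hx.1))
      · intro x hx
        rw [interior_Icc] at hx
        exact (((hasDerivAt_id x).const_mul B).sub (hdiffAt x hx.1).hasDerivAt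
          ).differentiableAt.differentiableWithinAt
      · intro x hx
        rw [interior_Icc] at hx
        have hD : HasDerivAt (fun x => B * x - μ x) (B * 1 - deriv μ x) x :=
          ((hasDerivAt_id x).const_mul B).sub (hdiffAt x hx.1).hasDerivAt
        rw [hD.deriv]
        have := hBdd x ⟨le_of_lt hx.1, le_of_lt hx.2⟩
        rw [← hderiv_eq x hx.1] at this
        linarith
    have h0 : (fun x => B * x - μ x) 0 ≤ (fun x => B * x - μ x) l :=
      hg ⟨le_rfl, zero_le_one⟩ hl hl.1
    simp only [mul_zero, hμ0, sub_zero] at h0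
    linarith
  -- the integrand is continuous on (0,∞)
  have hfcont : ContinuousOn (fun l => 1 / μ l) (Ioi 0) := by
    intro x hx
    exact (continuousAt_const.div (hμcontAt x hx) (ne_of_gt (hμpos x hx))).continuousWithinAt
  have hintg : ∀ a b : ℝ, 0 < a → 0 < b →
      IntervalIntegrable (fun l => 1 / μ l) MeasureTheory.volume a b := by
    intro a b ha hb
    apply ContinuousOn.intervalIntegrable
    apply hfcont.mono
    intro x hx
    rcases Set.mem_uIcc.1 hx with ⟨h, _⟩ | ⟨h, _⟩
    · exact lt_of_lt_of_le ha h
    · exact lt_of_lt_of_le hb h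
  -- FTC : derivative of the integral
  have hFd : ∀ x : ℝ, 0 < x →
      HasDerivAt (fun r => ∫ l in (1:ℝ)..r, 1 / μ l) (1 / μ x) x := by
    intro x hx
    exact intervalIntegral.integral_hasDerivAt_right (hintg 1 x one_pos hx)
      (hfcont.stronglyMeasurableAtFilter isOpen_Ioi x hx)
      (continuousAt_const.div (hμcontAt x hx) (ne_of_gt (hμpos x hx)))
  set F := fun r => ∫ l in (1:ℝ)..r, 1 / μ l with hF
  -- derivative of k at positive points
  have hkd : ∀ x : ℝ, 0 < x → HasDerivAt k (2 * B * k x / μ x) x := by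
    intro x hx
    have h1 : HasDerivAt (fun r => Real.exp (2 * B * F r))
        (Real.exp (2 * B * F x) * (2 * B * (1 / μ x))) x :=
      (((hFd x hx).const_mul (2 * B))).exp
    have h2 : HasDerivAt k (Real.exp (2 * B * F x) * (2 * B * (1 / μ x))) x := by
      apply h1.congr_of_eventuallyEq
      filter_upwards [isOpen_Ioi.mem_nhds hx] with y hy
      exact hk y hy
    have h3 : Real.exp (2 * B * F x) * (2 * B * (1 / μ x)) = 2 * B * k x / μ x := by
      rw [hk x hx]; ring
    rwa [h3] at h2
  -- key integral estimate : 2B ∫_1^r 1/μ ≤ 2 log r for r ∈ (0,1]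
  have hklog : ∀ r : ℝ, 0 < r → r ≤ 1 → 2 * B * F r ≤ 2 * Real.log r := by
    intro r hr hr1
    have h0notin : (0:ℝ) ∉ uIcc r 1 := by
      rw [uIcc_of_le hr1]
      intro h; exact absurd h.1 (not_le.2 hr)
    have hBl : IntervalIntegrable (fun l => (B * l)⁻¹) MeasureTheory.volume r 1 := by
      apply ContinuousOn.intervalIntegrable
      intro x hx
      rw [uIcc_of_le hr1] at hx
      have hx0 : 0 < x := lt_of_lt_of_le hr hx.1
      exact (continuousAt_const.mul continuousAt_id).inv₀
        (ne_of_gt (mul_pos hBpos hx0)) |>.continuousWithinAt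
    have hmono : ∫ l in r..1, (B * l)⁻¹ ≤ ∫ l in r..1, 1 / μ l := by
      apply intervalIntegral.integral_mono_on hr1 hBl (hintg r 1 hr one_pos)
      intro x hx
      have hx0 : 0 < x := lt_of_lt_of_le hr hx.1
      rw [one_div, inv_le_inv₀ (mul_pos hBpos hx0) (hμpos x hx0)]
      exact hμleB x ⟨le_of_lt hx0, hx.2⟩
    have hcomp : ∫ l in r..1, (B * l)⁻¹ = B⁻¹ * (- Real.log r) := by
      simp_rw [mul_inv]
      rw [intervalIntegral.integral_const_mul, integral_inv h0notin]
      rw [one_div, Real.log_inv]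
    have hsymm : F r = - ∫ l in r..1, 1 / μ l := intervalIntegral.integral_symm r 1
    have h1 : F r ≤ B⁻¹ * Real.log r := by
      rw [hsymm]
      rw [hcomp] at hmono
      linarith
    have h2 : 2 * B * F r ≤ 2 * B * (B⁻¹ * Real.log r) := by
      apply mul_le_mul_of_nonneg_left h1
      linarith
    have h3 : 2 * B * (B⁻¹ * Real.log r) = 2 * Real.log r := by
      field_simp
    linarith
  -- hence k r ≤ r^2 on (0,1]
  have hkr2 : ∀ r : ℝ, 0 < r → r ≤ 1 → k r ≤ r ^ 2 := by
    intro r hr hr1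
    rw [hk r hr]
    calc Real.exp (2 * B * F r) ≤ Real.exp (2 * Real.log r) :=
          Real.exp_le_exp.2 (hklog r hr hr1)
      _ = r ^ 2 := by rw [two_mul, Real.exp_add, Real.exp_log hr, sq]
  -- monotonicity of φ = 2B F - log μ - log
  have hφmono : MonotoneOn (fun r => 2 * B * F r - Real.log (μ r) - Real.log r) (Ioc 0 1) := by
    have hφd : ∀ x : ℝ, 0 < x →
        HasDerivAt (fun r => 2 * B * F r - Real.log (μ r) - Real.log r)
          (2 * B * (1 / μ x) - deriv μ x / μ x - x⁻¹) x := by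
      intro x hx
      exact (((hFd x hx).const_mul (2 * B)).sub
        ((hdiffAt x hx).hasDerivAt.log (ne_of_gt (hμpos x hx)))).sub (Real.hasDerivAt_log (ne_of_gt hx))
    apply monotoneOn_of_deriv_nonneg (convex_Ioc 0 1)
    · intro x hx
      exact (hφd x hx.1).continuousAt.continuousWithinAt
    · intro x hx
      rw [interior_Ioc] at hx
      exact (hφd x hx.1).differentiableAt.differentiableWithinAt
    · intro x hx
      rw [interior_Ioc] at hx
      rw [(hφd x hx.1).deriv]
      have hμx := hμpos x hx.1
      have h1 : deriv μ x ≤ B := by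
        rw [hderiv_eq x hx.1]
        exact hBdd x ⟨le_of_lt hx.1, le_of_lt hx.2⟩
      have h2 : μ x ≤ B * x := hμleB x ⟨le_of_lt hx.1, le_of_lt hx.2⟩
      have h3 : x⁻¹ ≤ B / μ x := by
        rw [inv_eq_one_div, div_le_div_iff₀ hx.1 hμx]
        linarith
      have h4 : deriv μ x / μ x ≤ B / μ x := by gcongr
      have h5 : 2 * B * (1 / μ x) = 2 * (B / μ x) := by ring
      linarith
  -- bound on k' near 0 : k' r ≤ 2 B r / μ 1 on (0,1]
  have hμ1 := hμpos 1 one_pos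
  have hk'bound : ∀ r : ℝ, 0 < r → r ≤ 1 → 2 * B * k r / μ r ≤ 2 * B * r / μ 1 := by
    intro r hr hr1
    have hμr := hμpos r hr
    have hφ := hφmono ⟨hr, hr1⟩ ⟨one_pos, le_rfl⟩ hr1
    have hF1 : F 1 = 0 := intervalIntegral.integral_same
    simp only [hF1, mul_zero, Real.log_one, sub_zero, zero_sub] at hφ
    -- hφ : 2*B*F r - log (μ r) - log r ≤ - log (μ 1)
    have hkr : k r ≤ μ r * r / μ 1 := by
      rw [hk r hr]
      have hlog : 2 * B * F r ≤ Real.log (μ r * r / μ 1) := by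
        rw [Real.log_div (by positivity) (ne_of_gt hμ1),
          Real.log_mul (ne_of_gt hμr) (ne_of_gt hr)]
        linarith
      calc Real.exp (2 * B * F r) ≤ Real.exp (Real.log (μ r * r / μ 1)) :=
            Real.exp_le_exp.2 hlog
        _ = μ r * r / μ 1 := Real.exp_log (by positivity)
    calc 2 * B * k r / μ r ≤ 2 * B * (μ r * r / μ 1) / μ r := by gcongr
      _ = 2 * B * r / μ 1 := by field_simp
  have hkpos : ∀ r : ℝ, 0 < r → 0 < k r := by
    intro r hr; rw [hk r hr]; exact Real.exp_pos _
  -- assemble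
  refine ⟨fun r => 2 * B * k r / μ r, ?_, ?_, by simp [hk0]⟩
  · -- continuity of k'
    intro x hx
    rcases eq_or_lt_of_le (mem_Ici.1 hx) with h0 | h0
    · -- at 0
      rw [ContinuousWithinAt, ← h0]
      have hval : 2 * B * k 0 / μ 0 = 0 := by simp [hk0]
      rw [hval]
      apply squeeze_zero' (g := fun t => 2 * B * t / μ 1)
      · filter_upwards [self_mem_nhdsWithin] with t ht
        rcases eq_or_lt_of_le (mem_Ici.1 ht) with h | h
        · simp [← h, hk0]
        · have h1 := hkpos t h
          have h2 := hμpos t h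
          positivity
      · filter_upwards [self_mem_nhdsWithin,
          nhdsWithin_le_nhds (Iio_mem_nhds one_pos)] with t ht ht1
        rcases eq_or_lt_of_le (mem_Ici.1 ht) with h | h
        · simp [← h, hk0]
        · exact hk'bound t h (le_of_lt ht1)
      · have : Tendsto (fun t : ℝ => 2 * B * t / μ 1) (𝓝 0) (𝓝 (2 * B * 0 / μ 1)) :=
          ((continuous_const.mul continuous_id).div_const (μ 1)).tendsto 0
        simpa using this.mono_left nhdsWithin_le_nhds
    · exact ((continuousAt_const.mul (hkd x h0).continuousAt).div
        (hμcontAt x h0) (ne_of_gt (hμpos x h0))).continuousWithinAt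
  · -- derivative
    intro r hr
    rcases eq_or_lt_of_le (mem_Ici.1 hr) with h0 | h0
    · -- at 0
      rw [← h0]
      show HasDerivWithinAt k (2 * B * k 0 / μ 0) (Ici 0) 0
      have hval : 2 * B * k 0 / μ 0 = 0 := by simp [hk0]
      rw [hval, hasDerivWithinAt_iff_tendsto_slope]
      have hpos : ∀ t ∈ Ici (0:ℝ) \ {0}, 0 < t := by
        intro t ht
        exact lt_of_le_of_ne (mem_Ici.1 ht.1) (Ne.symm ht.2)
      apply squeeze_zero' (g := fun t => t)
      · filter_upwards [self_mem_nhdsWithin] with t ht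
        have htpos := hpos t ht
        rw [slope_def_field, hk0]
        simp only [sub_zero]
        have h1 := hkpos t htpos
        positivity
      · filter_upwards [self_mem_nhdsWithin,
          nhdsWithin_le_nhds (Iio_mem_nhds one_pos)] with t ht ht1
        have htpos := hpos t ht
        rw [slope_def_field, hk0]
        simp only [sub_zero]
        rw [div_le_iff₀ htpos]
        have := hkr2 t htpos (le_of_lt ht1)
        nlinarith
      · exact tendsto_id.mono_left nhdsWithin_le_nhds
    · exact (hkd r h0).hasDerivWithinAt
end

section
/- Let μ: [0,∞) → [0,∞) be C¹ and positive definite with B = sup{μ'(s) : 0 ≤ s ≤ 1} > 0, and suppose c₃ > 0 satisfies μ(r) ≤ c₃ r on [0,1]. Then for ξ = 2B and k(r) = exp(ξ ∫_1^r dl/μ(l)) (r > 0), the bound 0 ≤ k'(r) ≤ ξ μ(1)^{−ξ/B} μ(r)^{ξ/B − 1} holds for all r ∈ (0,1]. -/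
open Set Filter intervalIntegral

theorem kprime_bound
    (μ : ℝ → ℝ) (hμC1 : ContDiffOn ℝ 1 μ (Ici 0))
    (hμ0 : μ 0 = 0) (hμpos : ∀ r : ℝ, 0 < r → 0 < μ r)
    (B : ℝ) (hB : B = sSup ((fun s => derivWithin μ (Ici 0) s) '' Icc 0 1))
    (hBpos : 0 < B)
    (c₃ : ℝ) (hc₃ : 0 < c₃) (hμlin : ∀ r ∈ Icc (0:ℝ) 1, μ r ≤ c₃ * r)
    (ξ : ℝ) (hξ : ξ = 2 * B)
    (k' : ℝ → ℝ)
    (hk' : ∀ r : ℝ, 0 < r →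
      k' r = (ξ / μ r) * Real.exp (-(ξ * ∫ l in r..(1:ℝ), 1 / μ l))) :
    ∀ r ∈ Ioc (0:ℝ) 1,
      0 ≤ k' r ∧ k' r ≤ ξ * (μ 1) ^ (-(ξ / B)) * (μ r) ^ (ξ / B - 1) := by
  intro r hr
  obtain ⟨hr0, hr1⟩ := hr
  have hμr : 0 < μ r := hμpos r hr0
  have hμ1 : 0 < μ 1 := hμpos 1 one_pos
  have hξpos : 0 < ξ := by rw [hξ]; linarith
  have hUD : UniqueDiffOn ℝ (Ici (0:ℝ)) := uniqueDiffOn_Ici 0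
  have hdc : ContinuousOn (fun s => derivWithin μ (Ici 0) s) (Ici 0) :=
    hμC1.continuousOn_derivWithin hUD le_rfl
  have hBdd : BddAbove ((fun s => derivWithin μ (Ici 0) s) '' Icc 0 1) :=
    (isCompact_Icc.image_of_continuousOn (hdc.mono Icc_subset_Ici_self)).bddAbove
  have hBle : ∀ s ∈ Icc (0:ℝ) 1, derivWithin μ (Ici 0) s ≤ B := by
    intro s hs
    rw [hB]; exact le_csSup hBdd (mem_image_of_mem _ hs)
  -- basic facts at points l > 0
  have hsub : Icc r 1 ⊆ Ici (0:ℝ) := fun x hx => le_trans hr0.le hx.1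
  have hμposIcc : ∀ l ∈ Icc r 1, 0 < μ l := fun l hl => hμpos l (lt_of_lt_of_le hr0 hl.1)
  have hdw : ∀ l ∈ Icc r 1, derivWithin μ (Ici 0) l = deriv μ l := by
    intro l hl
    exact derivWithin_of_mem_nhds (Ici_mem_nhds (lt_of_lt_of_le hr0 hl.1))
  have hdiff : ∀ l ∈ Icc r 1, DifferentiableAt ℝ μ l := by
    intro l hl
    exact ((hμC1.differentiableOn one_ne_zero) l (hsub hl)).differentiableAt
      (Ici_mem_nhds (lt_of_lt_of_le hr0 hl.1))
  -- continuity on Icc r 1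
  have hμcont : ContinuousOn μ (Icc r 1) := hμC1.continuousOn.mono hsub
  have hdcont : ContinuousOn (fun l => deriv μ l) (Icc r 1) :=
    (hdc.mono hsub).congr (fun l hl => (hdw l hl).symm)
  have hfcont : ContinuousOn (fun l => deriv μ l / μ l) (Icc r 1) :=
    hdcont.div hμcont (fun l hl => (hμposIcc l hl).ne')
  have hgcont : ContinuousOn (fun l => 1 / μ l) (Icc r 1) :=
    continuousOn_const.div hμcont (fun l hl => (hμposIcc l hl).ne')
  have hfint : IntervalIntegrable (fun l => deriv μ l / μ l) MeasureTheory.volume r 1 := by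
    apply ContinuousOn.intervalIntegrable
    rwa [Set.uIcc_of_le hr1]
  have hgint : IntervalIntegrable (fun l => 1 / μ l) MeasureTheory.volume r 1 := by
    apply ContinuousOn.intervalIntegrable
    rwa [Set.uIcc_of_le hr1]
  -- FTC for log ∘ μ
  have hftc : ∫ l in r..1, deriv μ l / μ l = Real.log (μ 1) - Real.log (μ r) := by
    have h := intervalIntegral.integral_eq_sub_of_hasDerivAt
      (f := fun x => Real.log (μ x)) (f' := fun l => deriv μ l / μ l)
      (fun l hl => by
        rw [Set.uIcc_of_le hr1] at hl
        exact ((hdiff l hl).hasDerivAt.log (hμposIcc l hl).ne')) hfint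
    simpa using h
  -- pointwise comparison
  have hmono : ∫ l in r..1, deriv μ l / μ l ≤ ∫ l in r..1, B * (1 / μ l) := by
    apply intervalIntegral.integral_mono_on hr1 hfint (hgint.const_mul B)
    intro l hl
    have hμl := hμposIcc l hl
    have hle : deriv μ l ≤ B := by
      rw [← hdw l hl]
      exact hBle l ⟨le_trans hr0.le hl.1, hl.2⟩
    rw [mul_one_div]
    gcongr
  have hineq : Real.log (μ 1) - Real.log (μ r) ≤ B * ∫ l in r..1, 1 / μ l := by
    rw [← hftc]
    calc ∫ l in r..1, deriv μ l / μ l ≤ ∫ l in r..1, B * (1 / μ l) := hmono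
    _ = B * ∫ l in r..1, 1 / μ l := intervalIntegral.integral_const_mul B _
  set I := ∫ l in r..(1:ℝ), 1 / μ l with hI
  -- exponential bound
  have hexp : Real.exp (-(ξ * I)) ≤ (μ 1) ^ (-(ξ / B)) * (μ r) ^ (ξ / B) := by
    have h1 : -(ξ * I) ≤ Real.log (μ 1) * (-(ξ / B)) + Real.log (μ r) * (ξ / B) := by
      have h2 : (ξ / B) * (Real.log (μ 1) - Real.log (μ r)) ≤ (ξ / B) * (B * I) :=
        mul_le_mul_of_nonneg_left hineq (by positivity)
      have hBne : B ≠ 0 := hBpos.ne'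
      have h3 : (ξ / B) * (B * I) = ξ * I := by field_simp
      nlinarith [h2]
    calc Real.exp (-(ξ * I))
        ≤ Real.exp (Real.log (μ 1) * (-(ξ / B)) + Real.log (μ r) * (ξ / B)) :=
          Real.exp_le_exp.mpr h1
      _ = (μ 1) ^ (-(ξ / B)) * (μ r) ^ (ξ / B) := by
          rw [Real.exp_add, Real.rpow_def_of_pos hμ1, Real.rpow_def_of_pos hμr]
  constructor
  · rw [hk' r hr0]
    positivity
  · rw [hk' r hr0]
    have step : (ξ / μ r) * Real.exp (-(ξ * I)) ≤
        (ξ / μ r) * ((μ 1) ^ (-(ξ / B)) * (μ r) ^ (ξ / B)) :=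
      mul_le_mul_of_nonneg_left hexp (by positivity)
    refine step.trans_eq ?_
    rw [Real.rpow_sub hμr, Real.rpow_one]
    field_simp
end

section
/- Let m: ℝ² × ℝ → [0,1] be any function, and for parameter τ ≤ 0 define the frozen pendulum vector field f(x,t,τ) = (x₂, −x₁ − (1 + τ m(x,t)) x₂). Then the function V(x) = x₁² + x₂² + x₁x₂ satisfies ∇V(x) · f(x,t,τ) ≤ −(1 + 5τ) V(x) for all x ∈ ℝ², t ∈ ℝ, and τ ≤ 0. -/
/-!
Along the frozen field with damping coefficient `1 + μ`, the derivative of `V` is exactly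
`-V - μ q` with `q = x₁ x₂ + 2 x₂²`, and `|q| ≤ 5 V` because both `5 V ± q` are positive definite
forms. Hence for `τ ≤ μ ≤ 0` the perturbation `-μ q` is at most `-5 τ V`; here `μ = τ m(x, t)`.
-/

theorem pendulum_lie_derivative_eq (μ x₁ x₂ : ℝ) :
    (2 * x₁ + x₂) * x₂ + (2 * x₂ + x₁) * (-x₁ - (1 + μ) * x₂)
      = -(x₁ ^ 2 + x₂ ^ 2 + x₁ * x₂) - μ * (x₁ * x₂ + 2 * x₂ ^ 2) := by
  ring

theorem abs_mul_add_two_mul_sq_le (x₁ x₂ : ℝ) :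
    |x₁ * x₂ + 2 * x₂ ^ 2| ≤ 5 * (x₁ ^ 2 + x₂ ^ 2 + x₁ * x₂) := by
  have h₁ := sq_nonneg (x₁ + x₂)
  have h₂ := sq_nonneg x₁
  have h₃ := sq_nonneg x₂
  rw [abs_le]
  constructor <;> nlinarith

theorem pendulum_lie_derivative_le {τ μ : ℝ} (hμ : μ ∈ Set.Icc τ 0) (x₁ x₂ : ℝ) :
    (2 * x₁ + x₂) * x₂ + (2 * x₂ + x₁) * (-x₁ - (1 + μ) * x₂)
      ≤ -(1 + 5 * τ) * (x₁ ^ 2 + x₂ ^ 2 + x₁ * x₂) := by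
  obtain ⟨hτμ, hμ0⟩ := hμ
  set V := x₁ ^ 2 + x₂ ^ 2 + x₁ * x₂
  set q := x₁ * x₂ + 2 * x₂ ^ 2
  have hq : |q| ≤ 5 * V := abs_mul_add_two_mul_sq_le x₁ x₂
  rw [pendulum_lie_derivative_eq]
  calc -V - μ * q
      ≤ -V + -μ * |q| := by
        linarith [mul_le_mul_of_nonneg_left (le_abs_self q) (neg_nonneg.2 hμ0)]
    _ ≤ -V + -τ * (5 * V) := by gcongr; linarith
    _ = -(1 + 5 * τ) * V := by ring

theorem pendulum_frozen_decay
    (m : ℝ → ℝ → ℝ → ℝ) (hm : ∀ x₁ x₂ t, 0 ≤ m x₁ x₂ t ∧ m x₁ x₂ t ≤ 1)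
    (τ : ℝ) (hτ : τ ≤ 0) (x₁ x₂ t : ℝ) :
    (2 * x₁ + x₂) * x₂
      + (2 * x₂ + x₁) * (-x₁ - (1 + τ * m x₁ x₂ t) * x₂)
      ≤ -(1 + 5 * τ) * (x₁ ^ 2 + x₂ ^ 2 + x₁ * x₂) := by
  obtain ⟨hm0, hm1⟩ := hm x₁ x₂ t
  refine pendulum_lie_derivative_le ⟨?_, mul_nonpos_of_nonpos_of_nonneg hτ hm0⟩ x₁ x₂
  simpa using mul_le_mul_of_nonpos_left hm1 hτ
end

section
/- For all x ∈ ℝ, the inequalities (2e^{√2}/(e−1))·(e^{√(1+x²)} − e) ≥ (x²/(1+x²))·e^{√(1+x²)} ≥ (1/2)·(e^{√(1+x²)} − e) hold. -/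
/-!
Put `s = √(1 + x²) ≥ 1`, so that `x² / (1 + x²) = (s² - 1) / s²`. Both bounds come from the
tangent line `e·t ≤ eᵗ` of the exponential at `t = 1`. At `t = s` it gives
`(s - 1)·eˢ ≤ s·(eˢ - e)`, which bounds the middle term by `2(eˢ - e)`, and the constant
`2e^{√2}/(e - 1)` exceeds `2`. At `t = 2 - s` it gives `(2 - s)·eˢ ≤ e`, which together with
`2 - s² ≤ s²(2 - s)` on `[1, 2]` yields the lower bound.
-/

open Real

lemma sub_one_mul_exp_le_mul_exp_sub_exp_one (s : ℝ) :
    (s - 1) * exp s ≤ s * (exp s - exp 1) := by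
  have := exp_one_mul_le_exp (x := s)
  nlinarith

lemma two_sub_mul_exp_le_exp_one (s : ℝ) : (2 - s) * exp s ≤ exp 1 := by
  have hprod : exp (2 - s) * exp s = exp 1 * exp 1 := by
    rw [← exp_add, ← exp_add]; norm_num
  have : exp 1 * ((2 - s) * exp s) ≤ exp 1 * exp 1 := by
    calc exp 1 * ((2 - s) * exp s) = exp 1 * (2 - s) * exp s := by ring
      _ ≤ exp (2 - s) * exp s := by gcongr; exact exp_one_mul_le_exp
      _ = exp 1 * exp 1 := hprod
  exact le_of_mul_le_mul_left this (exp_pos 1)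

lemma two_sub_sq_mul_exp_le {s : ℝ} (hs : 1 ≤ s) : (2 - s ^ 2) * exp s ≤ s ^ 2 * exp 1 := by
  rcases le_or_gt s 2 with hs2 | hs2
  · have hpoly : 2 - s ^ 2 ≤ s ^ 2 * (2 - s) := by
      nlinarith [mul_nonneg (sub_nonneg.mpr hs) (by nlinarith : 0 ≤ 2 + 2 * s - s ^ 2)]
    calc (2 - s ^ 2) * exp s ≤ s ^ 2 * (2 - s) * exp s := by gcongr
      _ = s ^ 2 * ((2 - s) * exp s) := by ring
      _ ≤ s ^ 2 * exp 1 := by gcongr; exact two_sub_mul_exp_le_exp_one s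
  · have : (2 - s ^ 2) * exp s ≤ 0 := mul_nonpos_of_nonpos_of_nonneg (by nlinarith) (exp_pos s).le
    linarith [mul_nonneg (sq_nonneg s) (exp_pos 1).le]

lemma sq_sub_one_div_sq_mul_exp_le {s : ℝ} (hs : 1 ≤ s) :
    (s ^ 2 - 1) / s ^ 2 * exp s ≤ 2 * (exp s - exp 1) := by
  have hs2 : 0 < s ^ 2 := by positivity
  have tangent := sub_one_mul_exp_le_mul_exp_sub_exp_one s
  rw [div_mul_eq_mul_div, div_le_iff₀ hs2]
  calc (s ^ 2 - 1) * exp s = (s + 1) * ((s - 1) * exp s) := by ring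
    _ ≤ 2 * s * ((s - 1) * exp s) :=
        mul_le_mul_of_nonneg_right (by linarith) (mul_nonneg (by linarith) (exp_pos s).le)
    _ ≤ 2 * s * (s * (exp s - exp 1)) := by gcongr
    _ = 2 * (exp s - exp 1) * s ^ 2 := by ring

lemma half_exp_sub_exp_one_le {s : ℝ} (hs : 1 ≤ s) :
    1 / 2 * (exp s - exp 1) ≤ (s ^ 2 - 1) / s ^ 2 * exp s := by
  have hs2 : 0 < s ^ 2 := by positivity
  rw [div_mul_eq_mul_div _ (s ^ 2), le_div_iff₀ hs2]
  linarith [two_sub_sq_mul_exp_le hs]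

lemma two_le_two_mul_exp_sqrt_two_div : 2 ≤ 2 * exp (√2) / (exp 1 - 1) := by
  have he : exp 1 ≤ exp (√2) := exp_le_exp.mpr (one_le_sqrt.mpr one_le_two)
  have hden : 0 < exp 1 - 1 := by linarith [add_one_le_exp 1]
  rw [le_div_iff₀ hden]
  linarith

theorem scalar_example_bounds (x : ℝ) :
    (2 * exp (Real.sqrt 2) / (exp 1 - 1)) * (exp (Real.sqrt (1 + x ^ 2)) - exp 1)
        ≥ (x ^ 2 / (1 + x ^ 2)) * exp (Real.sqrt (1 + x ^ 2))
      ∧ (x ^ 2 / (1 + x ^ 2)) * exp (Real.sqrt (1 + x ^ 2))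
        ≥ (1 / 2) * (exp (Real.sqrt (1 + x ^ 2)) - exp 1) := by
  set s := √(1 + x ^ 2)
  have hs_sq : s ^ 2 = 1 + x ^ 2 := sq_sqrt (by positivity)
  have hs : 1 ≤ s := one_le_sqrt.mpr (by nlinarith)
  have hfrac : x ^ 2 / (1 + x ^ 2) = (s ^ 2 - 1) / s ^ 2 := by rw [hs_sq]; ring
  have hgap : 0 ≤ exp s - exp 1 := sub_nonneg.mpr (exp_le_exp.mpr hs)
  rw [hfrac]
  refine ⟨?_, half_exp_sub_exp_one_le hs⟩
  calc (s ^ 2 - 1) / s ^ 2 * exp s ≤ 2 * (exp s - exp 1) := sq_sub_one_div_sq_mul_exp_le hs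
    _ ≤ 2 * exp (√2) / (exp 1 - 1) * (exp s - exp 1) := by
        gcongr; exact two_le_two_mul_exp_sqrt_two_div
end

section
/- Consider the frozen friction dynamics ẋ₁ = x₂, ẋ₂ = −τ₁x₂ − k(t)x₁ − (τ₂ + τ₃ e^{−β₁μ(x₂)}) sat(x₂) with parameters τ = (τ₁,τ₂,τ₃) ∈ [0,1]³, where sat(x₂) = tanh(β₂x₂), k is C¹ with k₀ ≤ k(t) ≤ k̄ and k'(t) ≤ 0, and μ ≥ 0. Then with A = 1 + k₀/2 + (1+2β₂)²/k₀ and V(x,t,τ) = A(k(t)x₁² + x₂²) + τ₁x₁x₂, the derivative of V along the frozen dynamics satisfies V̇(x,t,τ) ≤ −(τ₁k₀/(4A²k̄)) V(x,t,τ) for all x ∈ ℝ², t ≥ 0, τ ∈ [0,1]³. -/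
lemma my_sinh_le_mul_cosh {y : ℝ} (hy : 0 ≤ y) : Real.sinh y ≤ y * Real.cosh y := by
  have hmono : MonotoneOn (fun z : ℝ => z * Real.cosh z - Real.sinh z) (Set.Ici 0) := by
    apply monotoneOn_of_deriv_nonneg (convex_Ici 0)
    · exact ((continuous_id.mul Real.continuous_cosh).sub Real.continuous_sinh).continuousOn
    · intro z hz
      exact (((hasDerivAt_id z).mul (Real.hasDerivAt_cosh z)).sub
        (Real.hasDerivAt_sinh z)).differentiableAt.differentiableWithinAt
    · intro z hz
      have hd : HasDerivAt (fun z : ℝ => z * Real.cosh z - Real.sinh z)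
          (1 * Real.cosh z + z * Real.sinh z - Real.cosh z) z :=
        ((hasDerivAt_id z).mul (Real.hasDerivAt_cosh z)).sub (Real.hasDerivAt_sinh z)
      rw [hd.deriv]
      rw [interior_Ici, Set.mem_Ioi] at hz
      nlinarith [Real.sinh_nonneg_iff.2 hz.le]
  have h0 : (0:ℝ) ∈ Set.Ici (0:ℝ) := by simp
  have := hmono h0 (Set.mem_Ici.2 hy) hy
  simpa using this

lemma my_tanh_le {y : ℝ} (hy : 0 ≤ y) : Real.tanh y ≤ y := by
  rw [Real.tanh_eq_sinh_div_cosh, div_le_iff₀ (Real.cosh_pos y)]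
  exact my_sinh_le_mul_cosh hy

lemma my_abs_tanh_le (y : ℝ) : |Real.tanh y| ≤ |y| := by
  rcases le_total 0 y with h | h
  · rw [abs_of_nonneg (by rw [Real.tanh_eq_sinh_div_cosh]; positivity), abs_of_nonneg h]
    · exact my_tanh_le h
  · rw [abs_of_nonpos ?_, abs_of_nonpos h]
    · have := my_tanh_le (neg_nonneg.2 h)
      rw [Real.tanh_neg] at this; linarith
    · have := my_tanh_le (neg_nonneg.2 h)
      rw [Real.tanh_neg] at this
      have hs : Real.sinh y ≤ 0 := Real.sinh_nonpos_iff.2 h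
      rw [Real.tanh_eq_sinh_div_cosh]
      exact div_nonpos_of_nonpos_of_nonneg hs (Real.cosh_pos y).le

lemma my_tanh_nonneg {y : ℝ} (hy : 0 ≤ y) : 0 ≤ Real.tanh y := by
  rw [Real.tanh_eq_sinh_div_cosh]
  exact div_nonneg (Real.sinh_nonneg_iff.2 hy) (Real.cosh_pos y).le

lemma my_aux_quad (k₀ κ β₂ A a b : ℝ) (hk₀ : 0 < k₀) (hκ : k₀ ≤ κ) (hβ₂ : 0 < β₂)
    (ha : 0 ≤ a) (hb : 0 ≤ b)
    (hAk₀ : k₀ * A = k₀ + k₀ ^ 2 / 2 + (1 + 2 * β₂) ^ 2) :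
    0 ≤ 3 / 4 * (κ * a ^ 2) + (2 * A - 5 / 4) * b ^ 2 - (5 / 4 + 2 * β₂) * (a * b) := by
  have hAb : k₀ * A * b ^ 2 = (k₀ + k₀ ^ 2 / 2 + (1 + 2 * β₂) ^ 2) * b ^ 2 := by
    rw [hAk₀]
  have hX : 0 ≤ k₀ * (3 / 4 * (κ * a ^ 2) + (2 * A - 5 / 4) * b ^ 2
      - (5 / 4 + 2 * β₂) * (a * b)) := by
    linarith [sq_nonneg (k₀ * a - 2 * (1 + 2 * β₂) * b),
      mul_nonneg (mul_nonneg hk₀.le (sub_nonneg.2 hκ)) (sq_nonneg a),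
      sq_nonneg (k₀ * a),
      mul_nonneg hk₀.le (sq_nonneg b),
      sq_nonneg (k₀ * b),
      mul_nonneg (mul_nonneg hk₀.le ha) hb,
      mul_nonneg (mul_nonneg (mul_nonneg hβ₂.le hk₀.le) ha) hb]
  have h2 : 0 ≤ k₀ * (3 / 4 * (κ * a ^ 2) + (2 * A - 5 / 4) * b ^ 2
      - (5 / 4 + 2 * β₂) * (a * b)) / k₀ := div_nonneg hX hk₀.le
  rwa [mul_div_cancel_left₀ _ hk₀.ne'] at h2

set_option maxHeartbeats 1000000 in
theorem friction_frozen_decay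
    (β₁ β₂ k₀ kbar : ℝ) (hβ₁ : 0 < β₁) (hβ₂ : 0 < β₂)
    (hk₀ : 0 < k₀) (hk₀kbar : k₀ ≤ kbar)
    (μ : ℝ → ℝ) (hμ : ∀ s : ℝ, 0 ≤ μ s)
    (k k' : ℝ → ℝ)
    (hk : ∀ t : ℝ, 0 ≤ t → k₀ ≤ k t ∧ k t ≤ kbar)
    (hkderiv : ∀ t : ℝ, 0 ≤ t → HasDerivAt k (k' t) t)
    (hk' : ∀ t : ℝ, 0 ≤ t → k' t ≤ 0)
    (A : ℝ) (hA : A = 1 + k₀ / 2 + (1 + 2 * β₂) ^ 2 / k₀)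
    (τ₁ τ₂ τ₃ : ℝ) (hτ₁ : τ₁ ∈ Set.Icc (0:ℝ) 1)
    (hτ₂ : τ₂ ∈ Set.Icc (0:ℝ) 1) (hτ₃ : τ₃ ∈ Set.Icc (0:ℝ) 1)
    (x₁ x₂ t : ℝ) (ht : 0 ≤ t) :
    A * k' t * x₁ ^ 2
      + (2 * A * k t * x₁ + τ₁ * x₂) * x₂
      + (2 * A * x₂ + τ₁ * x₁)
        * (-(τ₁ * x₂) - k t * x₁
            - (τ₂ + τ₃ * Real.exp (-(β₁ * μ x₂))) * Real.tanh (β₂ * x₂))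
      ≤ -(τ₁ * k₀ / (4 * A ^ 2 * kbar))
          * (A * (k t * x₁ ^ 2 + x₂ ^ 2) + τ₁ * x₁ * x₂) := by
  obtain ⟨hτ₁0, hτ₁1⟩ := hτ₁
  obtain ⟨hτ₂0, hτ₂1⟩ := hτ₂
  obtain ⟨hτ₃0, hτ₃1⟩ := hτ₃
  obtain ⟨hκ0, hκbar⟩ := hk t ht
  set κ := k t with hκdef
  set κ' := k' t with hκ'def
  set s := Real.tanh (β₂ * x₂) with hsdef
  set c := τ₂ + τ₃ * Real.exp (-(β₁ * μ x₂)) with hcdef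
  set a := |x₁| with hadef
  set b := |x₂| with hbdef
  have ha0 : 0 ≤ a := abs_nonneg _
  have hb0 : 0 ≤ b := abs_nonneg _
  have hab : 0 ≤ a * b := mul_nonneg ha0 hb0
  have ha2 : x₁ ^ 2 = a ^ 2 := (sq_abs x₁).symm
  have hb2 : x₂ ^ 2 = b ^ 2 := (sq_abs x₂).symm
  have hκ'0 : κ' ≤ 0 := hk' t ht
  have hkbar0 : 0 < kbar := lt_of_lt_of_le hk₀ hk₀kbar
  -- A facts
  have hA1 : 1 ≤ A := by
    rw [hA]
    have h1 : 0 ≤ (1 + 2 * β₂) ^ 2 / k₀ := by positivity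
    have h2 : 0 ≤ k₀ / 2 := by positivity
    linarith
  have hA0 : 0 < A := lt_of_lt_of_le one_pos hA1
  have hAk₀ : k₀ * A = k₀ + k₀ ^ 2 / 2 + (1 + 2 * β₂) ^ 2 := by
    rw [hA]; field_simp
  -- c facts
  have hexp1 : Real.exp (-(β₁ * μ x₂)) ≤ 1 := by
    apply Real.exp_le_one_iff.2
    have h1 := hμ x₂
    have h2 : 0 ≤ β₁ * μ x₂ := mul_nonneg hβ₁.le h1
    linarith
  have hexp0 : 0 < Real.exp (-(β₁ * μ x₂)) := Real.exp_pos _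
  have hc0 : 0 ≤ c := by rw [hcdef]; positivity
  have hc2 : c ≤ 2 := by
    rw [hcdef]
    have h1 : τ₃ * Real.exp (-(β₁ * μ x₂)) ≤ 1 * 1 :=
      mul_le_mul hτ₃1 hexp1 hexp0.le one_pos.le
    linarith
  -- s facts
  have hxs : 0 ≤ x₂ * s := by
    rcases le_total 0 x₂ with h | h
    · exact mul_nonneg h (my_tanh_nonneg (by positivity))
    · have hbx : β₂ * x₂ ≤ 0 := mul_nonpos_of_nonneg_of_nonpos hβ₂.le h
      have hs0 : s ≤ 0 := by
        rw [hsdef, Real.tanh_eq_sinh_div_cosh]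
        exact div_nonpos_of_nonpos_of_nonneg (Real.sinh_nonpos_iff.2 hbx) (Real.cosh_pos _).le
      have := mul_nonneg (neg_nonneg.2 h) (neg_nonneg.2 hs0)
      linarith [this]
  have hsabs : |s| ≤ β₂ * b := by
    have h := my_abs_tanh_le (β₂ * x₂)
    rwa [abs_mul, abs_of_pos hβ₂] at h
  -- term bounds
  have f1 : A * κ' * a ^ 2 ≤ 0 :=
    mul_nonpos_of_nonpos_of_nonneg (mul_nonpos_of_nonneg_of_nonpos hA0.le hκ'0) (sq_nonneg a)
  have f2 : 0 ≤ 2 * A * (c * (x₂ * s)) := by positivity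
  have f3 : -(τ₁ * (2 * β₂ * (a * b))) ≤ τ₁ * (c * (x₁ * s)) := by
    have habs : |c * (x₁ * s)| ≤ 2 * β₂ * (a * b) := by
      rw [abs_mul, abs_mul]
      calc |c| * (|x₁| * |s|) ≤ 2 * (a * (β₂ * b)) := by
            apply mul_le_mul (by rwa [abs_of_nonneg hc0]) ?_ (by positivity) (by norm_num)
            exact mul_le_mul_of_nonneg_left hsabs ha0
        _ = 2 * β₂ * (a * b) := by ring
    have h2 : -(2 * β₂ * (a * b)) ≤ c * (x₁ * s) := by
      have := neg_abs_le (c * (x₁ * s)); linarith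
    have h3 := mul_le_mul_of_nonneg_left h2 hτ₁0
    linarith [h3]
  have f4 : -(τ₁ * (a * b)) ≤ τ₁ ^ 2 * (x₁ * x₂) := by
    have hx12 : -(a * b) ≤ x₁ * x₂ := by
      have := neg_abs_le (x₁ * x₂); rwa [abs_mul] at this
    have h1 := mul_le_mul_of_nonneg_left hx12 (sq_nonneg τ₁)
    have h2 : 0 ≤ (τ₁ - τ₁ ^ 2) * (a * b) := by
      have h0 : 0 ≤ τ₁ * (1 - τ₁) := mul_nonneg hτ₁0 (by linarith)
      exact mul_nonneg (by nlinarith [h0]) hab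
    linarith [h1, h2]
  -- Step 1
  set M := τ₁ * (-(κ * a ^ 2) + (1 - 2 * A) * b ^ 2 + (1 + 2 * β₂) * (a * b)) with hMdef
  have step1 : A * κ' * x₁ ^ 2
      + (2 * A * κ * x₁ + τ₁ * x₂) * x₂
      + (2 * A * x₂ + τ₁ * x₁) * (-(τ₁ * x₂) - κ * x₁ - c * s) ≤ M := by
    have hexpand : A * κ' * x₁ ^ 2
        + (2 * A * κ * x₁ + τ₁ * x₂) * x₂
        + (2 * A * x₂ + τ₁ * x₁) * (-(τ₁ * x₂) - κ * x₁ - c * s)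
        = A * κ' * x₁ ^ 2 - τ₁ * (κ * x₁ ^ 2) + τ₁ * ((1 - 2 * A) * x₂ ^ 2)
          + τ₁ ^ 2 * (x₁ * x₂) * (-1) - 2 * A * (c * (x₂ * s)) - τ₁ * (c * (x₁ * s)) := by
      ring
    rw [hexpand, ha2, hb2, hMdef]
    linarith [f1, f2, f3, f4]
  -- Step 2
  set lam := τ₁ * k₀ / (4 * A ^ 2 * kbar) with hlamdef
  set N := τ₁ / 4 * (κ * a ^ 2) + τ₁ / 4 * b ^ 2 + τ₁ / 4 * (a * b) with hNdef
  have step2 : lam * (A * (κ * x₁ ^ 2 + x₂ ^ 2) + τ₁ * x₁ * x₂) ≤ N := by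
    have hVb : A * (κ * x₁ ^ 2 + x₂ ^ 2) + τ₁ * x₁ * x₂
        ≤ A * (κ * a ^ 2 + b ^ 2) + a * b := by
      rw [ha2, hb2]
      have hx12 : x₁ * x₂ ≤ a * b := by
        have := le_abs_self (x₁ * x₂); rwa [abs_mul] at this
      have h1 : τ₁ * (x₁ * x₂) ≤ 1 * (a * b) := by
        rcases le_total 0 (x₁ * x₂) with h | h
        · calc τ₁ * (x₁ * x₂) ≤ 1 * (x₁ * x₂) := mul_le_mul_of_nonneg_right hτ₁1 h
            _ ≤ 1 * (a * b) := by linarith [hx12]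
        · calc τ₁ * (x₁ * x₂) ≤ 0 := mul_nonpos_of_nonneg_of_nonpos hτ₁0 h
            _ ≤ 1 * (a * b) := by linarith [hab]
      linarith [h1]
    have hlam0 : 0 ≤ lam := by rw [hlamdef]; positivity
    have h1 := mul_le_mul_of_nonneg_left hVb hlam0
    refine h1.trans ?_
    rw [hlamdef, div_mul_eq_mul_div, div_le_iff₀ (by positivity)]
    have hk₀A : k₀ ≤ A * kbar := by linarith [mul_nonneg (sub_nonneg.2 hA1) hkbar0.le]
    have hAA : k₀ * A ≤ A ^ 2 * kbar := by linarith [mul_le_mul_of_nonneg_left hk₀A hA0.le]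
    have hAB : k₀ ≤ A ^ 2 * kbar := by
      linarith [mul_nonneg (sub_nonneg.2 hA1) (mul_pos hA0 hkbar0).le, hk₀A]
    have hq : 0 ≤ κ * a ^ 2 + b ^ 2 := by
      have : 0 ≤ κ * a ^ 2 := mul_nonneg (le_trans hk₀.le hκ0) (sq_nonneg a)
      linarith [sq_nonneg b]
    have hint1 : 0 ≤ τ₁ * ((A ^ 2 * kbar - k₀ * A) * (κ * a ^ 2 + b ^ 2)) :=
      mul_nonneg hτ₁0 (mul_nonneg (sub_nonneg.2 hAA) hq)
    have hint2 : 0 ≤ τ₁ * ((A ^ 2 * kbar - k₀) * (a * b)) :=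
      mul_nonneg hτ₁0 (mul_nonneg (sub_nonneg.2 hAB) hab)
    rw [hNdef]
    linarith [hint1, hint2]
  -- Step 3
  have step3 : M + N ≤ 0 := by
    have hX2 := my_aux_quad k₀ κ β₂ A a b hk₀ hκ0 hβ₂ ha0 hb0 hAk₀
    have hτX : 0 ≤ τ₁ * (3 / 4 * (κ * a ^ 2) + (2 * A - 5 / 4) * b ^ 2
        - (5 / 4 + 2 * β₂) * (a * b)) := mul_nonneg hτ₁0 hX2
    rw [hMdef, hNdef]
    linarith [hτX]
  linarith [step1, step2, step3]
end

section
/- Under the hypotheses of the identification model (m: ℝ → ℝⁿ continuous with |m(t)| ≡ 1 and persistence-of-excitation constants c̃, α̲, ᾱ), with κ = c̃/2 + ᾱ²c̃⁴/(2α̲) + c̃², P(t,τ) = κI − τ∫_{t−c̃}^t∫_s^t m(l)m(l)ᵀ dl ds, V(x,t,τ) = xᵀP(t,τ)x, and frozen dynamics f(x,t,τ) = τ m(t)m(t)ᵀ x for τ ∈ [−ᾱ,0], the derivative V̇ = V_t + V_x f satisfies V̇(x,t,τ) ≤ (τα̲/2)|x|² ≤ −q(τ)V(x,t,τ), where q(τ)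 := −τα̲/(2(κ + c̃²ᾱ)). -/
/-!
Write `p = ⟪m t, x⟫`, `I = ∫_{t-c̃}^t ⟪m l, x⟫²` and `J = ∫_{t-c̃}^t ∫_s^t ⟪m l, x⟫⟪m l, m t⟫`.
Persistence of excitation gives `I ≥ α̲‖x‖²`, and since `m` is a unit vector the inner integrand
of `J` is bounded by `‖x‖`, so `|J| ≤ c̃²‖x‖/2`. The only indefinite term of `V̇` is the cross
term `-2τ²pJ`; Young's inequality with weight `ω = α̲/(2c̃²ᾱ)` splits it into half of the
excitation margin `-τα̲‖x‖²` and a multiple of `p²` that the `κ`-term `2τκp²` absorbs. The decay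
rate then follows from the crude upper bound `V ≤ (κ + c̃²ᾱ)‖x‖²`.
-/

open Set intervalIntegral

theorem abs_integral_integral_sub_le {f : ℝ → ℝ} {C c b : ℝ} (hc : 0 ≤ c)
    (hf : ∀ l, |f l| ≤ C) :
    |∫ s in (b - c)..b, ∫ l in s..b, f l| ≤ c ^ 2 / 2 * C := by
  have inner_le : ∀ s ≤ b, ‖∫ l in s..b, f l‖ ≤ (b - s) * C := fun s hs => by
    simpa [abs_of_nonneg (sub_nonneg.2 hs), mul_comm] using
      norm_integral_le_of_norm_le_const (a := s) (b := b) fun l _ =>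
        (Real.norm_eq_abs _).trans_le (hf l)
  have outer := norm_integral_le_of_norm_le (sub_le_self b hc)
    (Filter.Eventually.of_forall fun s hs => inner_le s hs.2)
    ((by fun_prop : Continuous fun s => (b - s) * C).intervalIntegrable
      (μ := MeasureTheory.volume) _ _)
  have integral_eq : ∫ s in (b - c)..b, (b - s) * C = c ^ 2 / 2 * C := by
    simp [integral_comp_sub_left fun s => s]
  simpa [integral_eq] using outer

theorem mul_le_mul_sq_add_sq_div {a b ε : ℝ} (hε : 0 < ε) :
    a * b ≤ ε * a ^ 2 + b ^ 2 / (4 * ε) := by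
  have key : ε * a ^ 2 + b ^ 2 / (4 * ε) - a * b = (2 * ε * a - b) ^ 2 / (4 * ε) := by
    field_simp
    ring
  have : 0 ≤ (2 * ε * a - b) ^ 2 / (4 * ε) := by positivity
  linarith

theorem lyapunov_deriv_le {c αlow αbar κ τ p I J N : ℝ} (hc : 0 < c) (hαlow : 0 < αlow)
    (hκ : κ = c / 2 + αbar ^ 2 * c ^ 4 / (2 * αlow) + c ^ 2) (hτl : -αbar ≤ τ) (hτu : τ ≤ 0)
    (hI : αlow * N ^ 2 ≤ I) (hJ : |J| ≤ c ^ 2 / 2 * N) :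
    -τ * (c * p ^ 2 - I) + 2 * τ * p * (κ * p - τ * J) ≤ τ * αlow / 2 * N ^ 2 := by
  set A := αbar ^ 2 * c ^ 4 / (2 * αlow)
  have hN : 0 ≤ N := nonneg_of_mul_nonneg_right ((abs_nonneg J).trans hJ) (by positivity)
  have young : αbar * c ^ 2 * (|p| * N) ≤ A * p ^ 2 + αlow / 2 * N ^ 2 := by
    have := mul_le_mul_sq_add_sq_div (a := N) (b := αbar * c ^ 2 * |p|) (half_pos hαlow)
    have hA : (αbar * c ^ 2 * |p|) ^ 2 / (4 * (αlow / 2)) = A * p ^ 2 := by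
      simp only [A, mul_pow, sq_abs]
      field_simp
      ring
    linarith
  have cross : -(τ ^ 2 * (p * J)) ≤ -τ * (αbar * c ^ 2 * (|p| * N)) / 2 := by
    have hpJ : -(p * J) ≤ |p| * (c ^ 2 / 2 * N) :=
      (neg_le_abs _).trans ((abs_mul p J).trans_le (mul_le_mul_of_nonneg_left hJ (abs_nonneg p)))
    have hτ2 : τ ^ 2 ≤ -τ * αbar := by nlinarith
    have h1 := mul_le_mul_of_nonneg_left hpJ (sq_nonneg τ)
    have h2 := mul_le_mul_of_nonneg_right hτ2 (by positivity : 0 ≤ |p| * N * c ^ 2)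
    linarith
  have hτI : τ * I ≤ τ * (αlow * N ^ 2) := mul_le_mul_of_nonpos_left hI hτu
  have hyoung := mul_le_mul_of_nonneg_left young (neg_nonneg.2 hτu)
  have hA : 0 ≤ A := by positivity
  have hp := mul_nonpos_of_nonpos_of_nonneg hτu (by positivity : 0 ≤ (A + 2 * c ^ 2) * p ^ 2)
  subst hκ
  linarith

theorem lyapunov_le {c αbar κ τ D M : ℝ} (hτl : -αbar ≤ τ) (hτu : τ ≤ 0)
    (hD : |D| ≤ c ^ 2 / 2 * M) : κ * M - τ * D ≤ (κ + c ^ 2 * αbar) * M := by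
  have h1 : -τ * D ≤ -τ * |D| := mul_le_mul_of_nonneg_left (le_abs_self D) (neg_nonneg.2 hτu)
  have h2 : -τ * |D| ≤ αbar * |D| := mul_le_mul_of_nonneg_right (by linarith) (abs_nonneg D)
  have h3 : αbar * |D| ≤ αbar * (c ^ 2 / 2 * M) := mul_le_mul_of_nonneg_left hD (by linarith)
  have h4 : 0 ≤ αbar * (c ^ 2 / 2 * M) := mul_nonneg (by linarith) ((abs_nonneg D).trans hD)
  linarith

theorem mul_le_neg_div_mul_of_le {a K V M : ℝ} (ha : a ≤ 0) (hK : 0 < K) (hV : V ≤ K * M) :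
    a / 2 * M ≤ -(-a / (2 * K)) * V := by
  have : a / (2 * K) * (K * M) ≤ a / (2 * K) * V :=
    mul_le_mul_of_nonpos_left hV (div_nonpos_of_nonpos_of_nonneg ha (by positivity))
  calc a / 2 * M = a / (2 * K) * (K * M) := by field_simp
    _ ≤ -(-a / (2 * K)) * V := by rwa [neg_div, neg_neg]

theorem identification_V_decay_general
    (n : ℕ) (m : ℝ → EuclideanSpace ℝ (Fin n))
    (hunit : ∀ t : ℝ, ‖m t‖ = 1)
    (ctil αlow αbar : ℝ) (hctil : 0 < ctil) (hαlow : 0 < αlow)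
    (hPE : ∀ (t : ℝ) (x : EuclideanSpace ℝ (Fin n)),
      αlow * ‖x‖ ^ 2 ≤ (∫ r in t..(t + ctil), (inner ℝ (m r) x : ℝ) ^ 2)
        ∧ (∫ r in t..(t + ctil), (inner ℝ (m r) x : ℝ) ^ 2) ≤ αbar * ‖x‖ ^ 2)
    (κ : ℝ) (hκ : κ = ctil / 2 + αbar ^ 2 * ctil ^ 4 / (2 * αlow) + ctil ^ 2)
    (τ : ℝ) (hτ : τ ∈ Icc (-αbar) 0)
    (t : ℝ) (x : EuclideanSpace ℝ (Fin n)) :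
    -- V̇ = V_t + V_x · f for V(x,t,τ) = κ‖x‖² − τ∫∫⟪m l, x⟫² and f = τ⟪m t, x⟫ m t
    (-τ * (ctil * (inner ℝ (m t) x : ℝ) ^ 2
            - ∫ l in (t - ctil)..t, (inner ℝ (m l) x : ℝ) ^ 2)
      + 2 * τ * (inner ℝ (m t) x : ℝ)
          * (κ * (inner ℝ (m t) x : ℝ)
              - τ * ∫ s in (t - ctil)..t, ∫ l in s..t,
                  (inner ℝ (m l) x : ℝ) * (inner ℝ (m l) (m t) : ℝ)))
      ≤ τ * αlow / 2 * ‖x‖ ^ 2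
    ∧ τ * αlow / 2 * ‖x‖ ^ 2
      ≤ -(-(τ * αlow) / (2 * (κ + ctil ^ 2 * αbar)))
          * (κ * ‖x‖ ^ 2
              - τ * ∫ s in (t - ctil)..t, ∫ l in s..t, (inner ℝ (m l) x : ℝ) ^ 2) := by
  obtain ⟨hτl, hτu⟩ := hτ
  have hinner : ∀ l y, |inner ℝ (m l) y| ≤ ‖y‖ := fun l y => by
    simpa [hunit l] using abs_real_inner_le_norm (m l) y
  have hJ : |∫ s in (t - ctil)..t, ∫ l in s..t, inner ℝ (m l) x * inner ℝ (m l) (m t)|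
      ≤ ctil ^ 2 / 2 * ‖x‖ := abs_integral_integral_sub_le hctil.le fun l => by
    simpa [abs_mul, hunit t] using
      mul_le_mul (hinner l x) (hinner l (m t)) (abs_nonneg _) (norm_nonneg x)
  have hD : |∫ s in (t - ctil)..t, ∫ l in s..t, inner ℝ (m l) x ^ 2| ≤ ctil ^ 2 / 2 * ‖x‖ ^ 2 :=
    abs_integral_integral_sub_le hctil.le fun l => by
      simpa [abs_pow] using pow_le_pow_left₀ (abs_nonneg _) (hinner l x) 2
  have hI : αlow * ‖x‖ ^ 2 ≤ ∫ l in (t - ctil)..t, (inner ℝ (m l) x : ℝ) ^ 2 := by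
    simpa using (hPE (t - ctil) x).1
  refine ⟨lyapunov_deriv_le hctil hαlow hκ hτl hτu hI hJ,
    mul_le_neg_div_mul_of_le (mul_nonpos_of_nonpos_of_nonneg hτu hαlow.le) ?_ ?_⟩
  · have : 0 ≤ αbar := by linarith
    rw [hκ]
    positivity
  · exact lyapunov_le hτl hτu hD

theorem identification_V_decay
    (n : ℕ) (m : ℝ → EuclideanSpace ℝ (Fin n)) (hm : Continuous m)
    (hunit : ∀ t : ℝ, ‖m t‖ = 1)
    (ctil αlow αbar : ℝ) (hctil : 0 < ctil) (hαlow : 0 < αlow) (hαbar : 0 < αbar)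
    (hPE : ∀ (t : ℝ) (x : EuclideanSpace ℝ (Fin n)),
      αlow * ‖x‖ ^ 2 ≤ (∫ r in t..(t + ctil), (inner ℝ (m r) x : ℝ) ^ 2)
        ∧ (∫ r in t..(t + ctil), (inner ℝ (m r) x : ℝ) ^ 2) ≤ αbar * ‖x‖ ^ 2)
    (κ : ℝ) (hκ : κ = ctil / 2 + αbar ^ 2 * ctil ^ 4 / (2 * αlow) + ctil ^ 2)
    (τ : ℝ) (hτ : τ ∈ Icc (-αbar) 0)
    (t : ℝ) (x : EuclideanSpace ℝ (Fin n)) :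
    -- V̇ = V_t + V_x · f for V(x,t,τ) = κ‖x‖² − τ∫∫⟪m l, x⟫² and f = τ⟪m t, x⟫ m t
    (-τ * (ctil * (inner ℝ (m t) x : ℝ) ^ 2
            - ∫ l in (t - ctil)..t, (inner ℝ (m l) x : ℝ) ^ 2)
      + 2 * τ * (inner ℝ (m t) x : ℝ)
          * (κ * (inner ℝ (m t) x : ℝ)
              - τ * ∫ s in (t - ctil)..t, ∫ l in s..t,
                  (inner ℝ (m l) x : ℝ) * (inner ℝ (m l) (m t) : ℝ)))
      ≤ τ * αlow / 2 * ‖x‖ ^ 2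
    ∧ τ * αlow / 2 * ‖x‖ ^ 2
      ≤ -(-(τ * αlow) / (2 * (κ + ctil ^ 2 * αbar)))
          * (κ * ‖x‖ ^ 2
              - τ * ∫ s in (t - ctil)..t, ∫ l in s..t, (inner ℝ (m l) x : ℝ) ^ 2) :=
  identification_V_decay_general n m hunit ctil αlow αbar hctil hαlow hPE κ hκ τ hτ t x
end

section
/- Suppose the frozen-dynamics Lyapunov family satisfies Assumption A₂ modified form: V̂(x,t) := V(x,t,p(t/α)) along trajectories of ẋ = f(x,t,p(t/α)) satisfies d/dt V̂ ≤ [−q(p(t/α)) + c_a p̄/α] V̂, where p̄ = sup|p'|. If additionally ∫_{t−T}^t q(p(s))ds ≥ c_b for all t, then for E(t,α) = exp((α/T)∫_{t/α−T}^{t/α}∫_s^{t/α} q(p(l)) dl ds), the function V^♯(t,x) = E(t,α)V̂(x,t) satisfies d/dt V^♯ ≤ E(t,α)[c_a p̄/α − c_b/T] V̂ along trajectories; in particular d/dt V^♯ ≤ −(c_b/(2T)) E(t,α) V̂ whenever α > 2T c_a p̄/c_b. -/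
open Set intervalIntegral

theorem sharp_Lyapunov_decay
    (d : ℕ) (p : ℝ → EuclideanSpace ℝ (Fin d)) (p' : ℝ → EuclideanSpace ℝ (Fin d))
    (hp : ∀ s : ℝ, HasDerivAt p (p' s) s)
    (pbar : ℝ) (hpbar : ∀ s : ℝ, ‖p' s‖ ≤ pbar)
    (hpbdd : ∃ C : ℝ, ∀ s : ℝ, ‖p s‖ ≤ C)
    (q : EuclideanSpace ℝ (Fin d) → ℝ) (hq : Continuous q)
    (hqbdd : ∃ M : ℝ, ∀ s : ℝ, |q (p s)| ≤ M)
    (ca cb T α : ℝ) (hca : 0 < ca) (hcb : 0 < cb) (hT : 0 < T) (hα : 0 < α)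
    (havg : ∀ t : ℝ, cb ≤ ∫ s in (t - T)..t, q (p s))
    (Vhat D : ℝ → ℝ) (hVnonneg : ∀ t : ℝ, 0 ≤ Vhat t)
    (hVderiv : ∀ t : ℝ, HasDerivAt Vhat (D t) t)
    (hD : ∀ t : ℝ, D t ≤ (-(q (p (t / α))) + ca * pbar / α) * Vhat t)
    (E : ℝ → ℝ)
    (hE : ∀ t : ℝ, E t = Real.exp ((α / T) *
      ∫ s in (t / α - T)..(t / α), ∫ l in s..(t / α), q (p l))) :
    ∀ t : ℝ, ∃ dV : ℝ,
      HasDerivAt (fun u : ℝ => E u * Vhat u) dV t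
      ∧ dV ≤ E t * (ca * pbar / α - cb / T) * Vhat t
      ∧ (2 * T * ca * pbar / cb < α → dV ≤ -(cb / (2 * T)) * E t * Vhat t) := by
  have hpc : Continuous p := by
    rw [continuous_iff_continuousAt]
    exact fun s => (hp s).continuousAt
  set qp : ℝ → ℝ := fun s => q (p s) with hqp_def
  have hqpc : Continuous qp := hq.comp hpc
  set F : ℝ → ℝ := fun u => ∫ l in (0:ℝ)..u, qp l with hF_def
  have hF : ∀ u : ℝ, HasDerivAt F (qp u) u := fun u =>
    intervalIntegral.integral_hasDerivAt_right (hqpc.intervalIntegrable _ _)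
      (hqpc.stronglyMeasurableAtFilter _ _) hqpc.continuousAt
  have hFc : Continuous F := by
    rw [continuous_iff_continuousAt]
    exact fun u => (hF u).continuousAt
  have hsub : ∀ a b : ℝ, (∫ l in a..b, qp l) = F b - F a := by
    intro a b
    rw [hF_def]
    exact (intervalIntegral.integral_interval_sub_left
      (hqpc.intervalIntegrable _ _) (hqpc.intervalIntegrable _ _)).symm
  set H : ℝ → ℝ := fun u => ∫ s in (0:ℝ)..u, F s with hH_def
  have hH : ∀ u : ℝ, HasDerivAt H (F u) u := fun u =>
    intervalIntegral.integral_hasDerivAt_right (hFc.intervalIntegrable _ _)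
      (hFc.stronglyMeasurableAtFilter _ _) hFc.continuousAt
  have hHsub : ∀ a b : ℝ, (∫ s in a..b, F s) = H b - H a := by
    intro a b
    rw [hH_def]
    exact (intervalIntegral.integral_interval_sub_left
      (hFc.intervalIntegrable _ _) (hFc.intervalIntegrable _ _)).symm
  set G : ℝ → ℝ := fun x => (α / T) * (T * F (x / α) - (H (x / α) - H (x / α - T)))
    with hG_def
  have hEeq : ∀ x : ℝ, E x = Real.exp (G x) := by
    intro x
    rw [hE x, hG_def]
    congr 2
    have h1 : (∫ s in (x / α - T)..(x / α), ∫ l in s..(x / α), qp l)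
        = ∫ s in (x / α - T)..(x / α), (F (x / α) - F s) :=
      intervalIntegral.integral_congr (fun s _ => hsub s (x / α))
    rw [h1, intervalIntegral.integral_sub intervalIntegrable_const
      (hFc.intervalIntegrable _ _), intervalIntegral.integral_const, hHsub]
    simp only [smul_eq_mul]
    ring
  intro t
  have h1 : HasDerivAt (fun x : ℝ => x / α) (1 / α) t := by
    simpa using (hasDerivAt_id t).div_const α
  have h2 : HasDerivAt (fun x : ℝ => F (x / α)) (qp (t / α) * (1 / α)) t :=
    by have := (hF (t / α)).comp t h1; exact this
  have h3 : HasDerivAt (fun x : ℝ => H (x / α)) (F (t / α) * (1 / α)) t :=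
    by have := (hH (t / α)).comp t h1; exact this
  have h4 : HasDerivAt (fun x : ℝ => H (x / α - T)) (F (t / α - T) * (1 / α)) t :=
    by have := (hH (t / α - T)).comp t (h1.sub_const T); exact this
  have hGder : HasDerivAt G
      ((α / T) * (T * (qp (t / α) * (1 / α)) -
        (F (t / α) * (1 / α) - F (t / α - T) * (1 / α)))) t :=
    (((h2.const_mul T).sub (h3.sub h4)).const_mul (α / T))
  have hEfun : (fun x : ℝ => Real.exp (G x)) = E := funext fun x => (hEeq x).symm
  have hEder : HasDerivAt E
      (Real.exp (G t) * ((α / T) * (T * (qp (t / α) * (1 / α)) -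
        (F (t / α) * (1 / α) - F (t / α - T) * (1 / α))))) t := by
    rw [← hEfun]
    exact hGder.exp
  have hprod := hEder.mul (hVderiv t)
  refine ⟨_, hprod, ?_⟩
  have hI : cb ≤ F (t / α) - F (t / α - T) := by
    have := havg (t / α)
    rwa [hsub] at this
  have hEt : E t = Real.exp (G t) := hEeq t
  have hEpos : 0 < E t := by rw [hEt]; exact Real.exp_pos _
  have hTne : (T : ℝ) ≠ 0 := ne_of_gt hT
  have hαne : (α : ℝ) ≠ 0 := ne_of_gt hα
  have hd : Real.exp (G t) * ((α / T) * (T * (qp (t / α) * (1 / α)) -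
      (F (t / α) * (1 / α) - F (t / α - T) * (1 / α))))
      = E t * (qp (t / α) - (F (t / α) - F (t / α - T)) / T) := by
    rw [hEt]; field_simp
  have hDt := hD t
  have hV := hVnonneg t
  have key : Real.exp (G t) * ((α / T) * (T * (qp (t / α) * (1 / α)) -
      (F (t / α) * (1 / α) - F (t / α - T) * (1 / α)))) * Vhat t + E t * D t
      ≤ E t * (ca * pbar / α - cb / T) * Vhat t := by
    rw [hd]
    have h5 : E t * D t ≤ E t * ((-(qp (t / α)) + ca * pbar / α) * Vhat t) :=
      mul_le_mul_of_nonneg_left hDt (le_of_lt hEpos)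
    have h6 : E t * (qp (t / α) - (F (t / α) - F (t / α - T)) / T) * Vhat t
        ≤ E t * (qp (t / α) - cb / T) * Vhat t := by
      apply mul_le_mul_of_nonneg_right _ hV
      apply mul_le_mul_of_nonneg_left _ (le_of_lt hEpos)
      have h8 : cb / T ≤ (F (t / α) - F (t / α - T)) / T :=
        div_le_div_of_nonneg_right hI hT.le
      linarith
    nlinarith [h5, h6]
  refine ⟨key, fun hbig => ?_⟩
  have hpbar0 : 0 ≤ pbar := le_trans (norm_nonneg _) (hpbar 0)
  have hstep : ca * pbar / α ≤ cb / (2 * T) := by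
    rw [div_le_div_iff₀ hα (by positivity)]
    have := (div_lt_iff₀ hcb).mp hbig
    nlinarith
  have hEV : 0 ≤ E t * Vhat t := mul_nonneg (le_of_lt hEpos) hV
  have : E t * (ca * pbar / α - cb / T) * Vhat t ≤ -(cb / (2 * T)) * E t * Vhat t := by
    have h7 : ca * pbar / α - cb / T ≤ -(cb / (2 * T)) := by
      have : cb / T = cb / (2 * T) + cb / (2 * T) := by field_simp; ring
      linarith
    nlinarith [hEV]
  linarith [key]
end
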